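/- Let q ≥ 3 be an integer, let β_s = β_s(q), and let s* be the unique zero of D_{β_s} in (1/q, 1]. Then: (i) (∂/∂β) D_β(s*)|_{β = β_s} > 0; and (ii) for every ρ > 0 there exist δ > 0 and c > 0 such that D_β(s) ≤ −c for all β with |β − β_s| < δ and all s ∈ (1/q + ρ, 1] with |s − s*| ≥ ρ. -/

import Mathlib

/-
Since `s* > 1/q`, the exponent `2β(1 − q s*)/(q − 1)` in `D_β(s*)` is strictly decreasing in `β`,
so `D_β(s*)` is strictly increasing in `β`; this gives (i).

For (ii), first `D_{β_s} ≤ 0` on `(1/q, 1]`: a positive value `D_{β_s}(x)` would persist for some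
`β` close to `β_s` in the set defining `β_s`, and since `D_β(1) < 0` the intermediate value theorem
would give `D_β` a zero in `(x, 1)`. By uniqueness of the zero, `D_{β_s} < 0` on the compact set of
admissible `s`, and joint continuity makes this bound uniform for `β` near `β_s`.
-/

/-- The drift function `D_β(x) = −x + (1 + (q−1) e^{2β(1−qx)/(q−1)})⁻¹`,
equivalently `−x + e^{2βx}/(e^{2βx} + (q−1)e^{2β(1−x)/(q−1)})`. -/
noncomputable def Dfun (q : ℕ) (β x : ℝ) : ℝ :=
  -x + (1 + ((q : ℝ) - 1) * Real.exp (2 * β * (1 - (q : ℝ) * x) / ((q : ℝ) - 1)))⁻¹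

/-- The dynamical (spinodal) critical inverse temperature
`β_s(q) = sup {β ≥ 0 : D_β(x) ≠ 0 for all x ∈ (1/q,1)}`. -/
noncomputable def betaS (q : ℕ) : ℝ :=
  sSup {β : ℝ | 0 ≤ β ∧ ∀ x ∈ Set.Ioo (1 / (q : ℝ)) 1, Dfun q β x ≠ 0}

open Set Filter Topology

theorem IsCompact.exists_uniform_neg_bound_of_continuous_prod {α X : Type*} [PseudoMetricSpace α]
    [TopologicalSpace X] {f : α × X → ℝ} (hf : Continuous f) {K : Set X} (hK : IsCompact K)
    {a : α} (hneg : ∀ s ∈ K, f (a, s) < 0) :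
    ∃ δ > 0, ∃ c > 0, ∀ b, dist b a < δ → ∀ s ∈ K, f (b, s) ≤ -c := by
  obtain ⟨m, hm, hmK⟩ : ∃ m, 0 < m ∧ ∀ s ∈ K, m ≤ -f (a, s) :=
    hK.exists_forall_le' (hf.comp (Continuous.prodMk_right a)).neg.continuousOn
      fun s hs => neg_pos.mpr (hneg s hs)
  have hnear : ∀ᶠ b in 𝓝 a, ∀ s ∈ K, f (b, s) < -(m / 2) :=
    hK.eventually_forall_of_forall_eventually fun s hs =>
      hf.continuousAt.eventually_lt continuousAt_const (by linarith [hmK s hs])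
  obtain ⟨δ, hδ, hball⟩ := Metric.eventually_nhds_iff.mp hnear
  exact ⟨δ, hδ, m / 2, half_pos hm, fun b hb s hs => (hball hb s hs).le⟩

section

variable {q : ℕ}

lemma one_add_mul_exp_pos (hq : 1 ≤ q) (t : ℝ) : 0 < 1 + ((q : ℝ) - 1) * Real.exp t := by
  have : (1 : ℝ) ≤ q := by exact_mod_cast hq
  positivity

lemma continuous_Dfun_uncurry (hq : 1 ≤ q) : Continuous fun p : ℝ × ℝ => Dfun q p.1 p.2 := by
  unfold Dfun
  exact continuous_snd.neg.add <|
    (by fun_prop : Continuous _).inv₀ fun p => (one_add_mul_exp_pos hq _).ne'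

lemma Dfun_one_neg (hq : 1 < q) (β : ℝ) : Dfun q β 1 < 0 := by
  have : (1 : ℝ) < q := by exact_mod_cast hq
  have hden : 1 < 1 + ((q : ℝ) - 1) * Real.exp (2 * β * (1 - q * 1) / (q - 1)) := by
    have := Real.exp_pos (2 * β * (1 - q * 1) / (q - 1))
    nlinarith
  unfold Dfun
  linarith [inv_lt_one_of_one_lt₀ hden]

lemma Dfun_zero_left (q : ℕ) (x : ℝ) : Dfun q 0 x = (q : ℝ)⁻¹ - x := by
  simp [Dfun, sub_eq_neg_add]

lemma Dfun_half_pos (hq : 2 < q) {β : ℝ} (hβ : ((q : ℝ) - 1) ^ 2 ≤ (q - 2) * β) :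
    0 < Dfun q β (1 / 2) := by
  have h2 : (2 : ℝ) < q := by exact_mod_cast hq
  set u := (q - 2) * β / (q - 1) with hu
  have hqu : (q : ℝ) - 1 ≤ u := by
    rw [hu, le_div_iff₀ (by linarith)]
    nlinarith
  have hexp : (q : ℝ) - 1 < Real.exp u := by linarith [Real.add_one_le_exp u]
  have hsmall : ((q : ℝ) - 1) * Real.exp (-u) < 1 := by
    rw [Real.exp_neg, ← div_eq_mul_inv, div_lt_one (Real.exp_pos u)]
    exact hexp
  have hden : 1 + ((q : ℝ) - 1) * Real.exp (-u) < 2 := by linarith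
  have hpos := one_add_mul_exp_pos (by omega : 1 ≤ q) (-u)
  have hexponent : 2 * β * (1 - q * (1 / 2)) / (q - 1) = -u := by
    rw [hu]; ring
  unfold Dfun
  rw [hexponent]
  have := (inv_lt_inv₀ (by norm_num) hpos).mpr hden
  linarith

lemma exists_Dfun_eq_zero_of_pos (hq : 1 < q) {β x : ℝ} (hx : x ≤ 1) (hpos : 0 < Dfun q β x) :
    ∃ z ∈ Ioo x 1, Dfun q β z = 0 :=
  intermediate_value_Ioo' hx
    ((continuous_Dfun_uncurry hq.le).comp (Continuous.prodMk_right β)).continuousOn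
    ⟨Dfun_one_neg hq β, hpos⟩

lemma deriv_Dfun_left_pos (hq : 1 < q) {x : ℝ} (hx : 1 / (q : ℝ) < x) (β : ℝ) :
    0 < deriv (fun β => Dfun q β x) β := by
  have hq1 : (0 : ℝ) < q - 1 := by
    have : (1 : ℝ) < q := by exact_mod_cast hq
    linarith
  set k := 2 * (1 - q * x) / (q - 1) with hk
  have hk_neg : k < 0 := by
    rw [div_lt_iff₀ (by linarith)] at hx
    exact div_neg_of_neg_of_pos (by linarith) hq1
  have hden := one_add_mul_exp_pos hq.le (β * k)
  have hfun : (fun β => Dfun q β x) = fun β => -x + (1 + ((q : ℝ) - 1) * Real.exp (β * k))⁻¹ := by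
    funext b
    simp only [Dfun, hk]
    ring_nf
  have hderiv : HasDerivAt (fun β => -x + (1 + ((q : ℝ) - 1) * Real.exp (β * k))⁻¹)
      (-((q - 1) * (Real.exp (β * k) * k)) / (1 + (q - 1) * Real.exp (β * k)) ^ 2) β :=
    ((((hasDerivAt_mul_const k).exp.const_mul _).const_add 1).inv hden.ne').const_add (-x)
  rw [hfun, hderiv.deriv]
  have := mul_pos hq1 (Real.exp_pos (β * k))
  exact div_pos (by nlinarith) (pow_pos hden 2)

def zeroFreeSet (q : ℕ) : Set ℝ :=
  {β : ℝ | 0 ≤ β ∧ ∀ x ∈ Ioo (1 / (q : ℝ)) 1, Dfun q β x ≠ 0}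

lemma zero_mem_zeroFreeSet (q : ℕ) : (0 : ℝ) ∈ zeroFreeSet q := by
  refine ⟨le_rfl, fun x hx => ?_⟩
  rw [Dfun_zero_left, sub_ne_zero, ← one_div]
  exact hx.1.ne

lemma bddAbove_zeroFreeSet (hq : 3 ≤ q) : BddAbove (zeroFreeSet q) := by
  have h2 : (0 : ℝ) < q - 2 := by
    have : (3 : ℝ) ≤ q := by exact_mod_cast hq
    linarith
  refine ⟨((q : ℝ) - 1) ^ 2 / (q - 2), fun β hβ => ?_⟩
  by_contra! hlarge
  rw [div_lt_iff₀ h2, mul_comm] at hlarge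
  obtain ⟨z, hz, hz0⟩ := exists_Dfun_eq_zero_of_pos (by omega) (by norm_num)
    (Dfun_half_pos (by omega) hlarge.le)
  have hq_inv : 1 / (q : ℝ) < 1 / 2 := by
    rw [div_lt_div_iff₀ (by linarith) two_pos]
    linarith
  exact hβ.2 z ⟨hq_inv.trans hz.1, hz.2⟩ hz0

lemma Dfun_betaS_nonpos (hq : 3 ≤ q) {x : ℝ} (hx : x ∈ Ioc (1 / (q : ℝ)) 1) :
    Dfun q (betaS q) x ≤ 0 := by
  by_contra! hpos
  have hclosure : betaS q ∈ closure (zeroFreeSet q) :=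
    csSup_mem_closure ⟨0, zero_mem_zeroFreeSet q⟩ (bddAbove_zeroFreeSet hq)
  obtain ⟨β, hβpos, hβ⟩ := mem_closure_iff.mp hclosure {β | 0 < Dfun q β x}
    (isOpen_lt continuous_const
      ((continuous_Dfun_uncurry (by omega)).comp (Continuous.prodMk_left x))) hpos
  obtain ⟨z, hz, hz0⟩ := exists_Dfun_eq_zero_of_pos (by omega) hx.2 hβpos
  exact hβ.2 z ⟨hx.1.trans hz.1, hz.2⟩ hz0

end

theorem Dfun_near_betaS_general (q : ℕ) (hq : 3 ≤ q) (sStar : ℝ)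
    (hmem : sStar ∈ Set.Ioc (1 / (q : ℝ)) 1)
    (huniq : ∀ s ∈ Set.Ioc (1 / (q : ℝ)) 1, Dfun q (betaS q) s = 0 → s = sStar) :
    0 < deriv (fun β => Dfun q β sStar) (betaS q) ∧
    ∀ ρ : ℝ, 0 < ρ → ∃ δ c : ℝ, 0 < δ ∧ 0 < c ∧
      ∀ β : ℝ, |β - betaS q| < δ →
        ∀ s ∈ Set.Ioc (1 / (q : ℝ) + ρ) 1, ρ ≤ |s - sStar| → Dfun q β s ≤ -c := by
  refine ⟨deriv_Dfun_left_pos (by omega) hmem.1 _, fun ρ hρ => ?_⟩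
  set K := Icc (1 / (q : ℝ) + ρ) 1 ∩ {s | ρ ≤ |s - sStar|}
  have hK : IsCompact K :=
    isCompact_Icc.inter_right (isClosed_le continuous_const (by fun_prop))
  have hneg : ∀ s ∈ K, Dfun q (betaS q) s < 0 := by
    rintro s ⟨⟨hs_lo, hs_hi⟩, hs_far : ρ ≤ |s - sStar|⟩
    have hs : s ∈ Ioc (1 / (q : ℝ)) 1 := ⟨by linarith, hs_hi⟩
    refine (Dfun_betaS_nonpos hq hs).lt_of_ne fun hs0 => ?_
    rw [huniq s hs hs0, sub_self, abs_zero] at hs_far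
    linarith
  obtain ⟨δ, hδ, c, hc, hbound⟩ :=
    hK.exists_uniform_neg_bound_of_continuous_prod (continuous_Dfun_uncurry (by omega)) hneg
  exact ⟨δ, c, hδ, hc, fun β hβ s hs hs_far =>
    hbound β (by rwa [Real.dist_eq]) s ⟨Ioc_subset_Icc_self hs, hs_far⟩⟩

/-- (Proposition 5.1, parts 2 and 3): let `s*` be the unique zero of
`D_{β_s}` in `(1/q,1]`. Then (i) `(∂/∂β) D_β(s*)` at `β = β_s` is strictly
positive, and (ii) for every `ρ > 0` there are `δ, c > 0` such that
`D_β(s) ≤ −c` whenever `|β − β_s| < δ`, `s ∈ (1/q + ρ, 1]` and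
`|s − s*| ≥ ρ`. -/
theorem Dfun_near_betaS (q : ℕ) (hq : 3 ≤ q) (sStar : ℝ)
    (hmem : sStar ∈ Set.Ioc (1 / (q : ℝ)) 1)
    (hzero : Dfun q (betaS q) sStar = 0)
    (huniq : ∀ s ∈ Set.Ioc (1 / (q : ℝ)) 1, Dfun q (betaS q) s = 0 → s = sStar) :
    0 < deriv (fun β => Dfun q β sStar) (betaS q) ∧
    ∀ ρ : ℝ, 0 < ρ → ∃ δ c : ℝ, 0 < δ ∧ 0 < c ∧
      ∀ β : ℝ, |β - betaS q| < δ →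
        ∀ s ∈ Set.Ioc (1 / (q : ℝ) + ρ) 1, ρ ≤ |s - sStar| → Dfun q β s ≤ -c :=
  Dfun_near_betaS_general q hq sStar hmem huniq
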